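/- arXiv:1202.4672 — 4 statements merged into one kernel-verified Lean document; each statement's English description precedes it below -/
import Mathlib

section
/- Let g : ℝ → ℝ be differentiable, α ≠ 0, and suppose g(x) = α·g(g(x/α)) and g'(x) = g'(g(x/α))·g'(x/α) for all x. Let k be a natural number and define h(x) = g(x)^k − x^k·g'(x). Then the naive linearized doubling operator L(g)h(x) = α·(g'(g(x/α))·h(x/α) + h(g(x/α))) satisfies L(g)h(x) = α^{1−k}·h(x) for all x. -/
/-!
Put `y = x / α` and `u = g y`. In `g'(u) h(y) + h(u)` the terms `g'(u) g(y)^k` and `-u^k g'(u)`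
cancel because `u = g y`; the functional equations turn what is left, `g(u)^k - y^k g'(u) g'(y)`,
into `(g(x)^k - x^k g'(x)) / α^k`.
-/

section

variable {𝕜 : Type*} [Field 𝕜]

/-- `d` plays the role of `g'`; `α` is held fixed rather than varied with `g`. -/
def naiveDoublingLinearization (α : 𝕜) (g d h : 𝕜 → 𝕜) (x : 𝕜) : 𝕜 :=
  α * (d (g (x / α)) * h (x / α) + h (g (x / α)))

def powSubPowMul (g d : 𝕜 → 𝕜) (k : ℕ) (x : 𝕜) : 𝕜 :=
  g x ^ k - x ^ k * d x

theorem naiveDoublingLinearization_powSubPowMul {α : 𝕜} {g d : 𝕜 → 𝕜} (hα : α ≠ 0)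
    (heq : ∀ x, g x = α * g (g (x / α))) (hd : ∀ x, d x = d (g (x / α)) * d (x / α))
    (k : ℕ) (x : 𝕜) :
    naiveDoublingLinearization α g d (powSubPowMul g d k) x
      = α ^ (1 - (k : ℤ)) * powSubPowMul g d k x := by
  have hgg : g (g (x / α)) = g x / α := by
    rw [heq x, mul_div_cancel_left₀ _ hα]
  have hpow : α ^ (1 - (k : ℤ)) = α / α ^ k := by
    rw [zpow_sub₀ hα, zpow_one, zpow_natCast]
  calc naiveDoublingLinearization α g d (powSubPowMul g d k) x
      = α * (g (g (x / α)) ^ k - (x / α) ^ k * (d (g (x / α)) * d (x / α))) := by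
        unfold naiveDoublingLinearization powSubPowMul
        ring
    _ = α ^ (1 - (k : ℤ)) * powSubPowMul g d k x := by
        rw [hgg, ← hd, hpow, powSubPowMul, div_pow, div_pow]
        ring

end

theorem naive_linearization_eigenfunctions_general (g : ℝ → ℝ) (α : ℝ) (k : ℕ)
    (hα : α ≠ 0)
    (heq : ∀ x : ℝ, g x = α * g (g (x / α)))
    (heq' : ∀ x : ℝ, deriv g x = deriv g (g (x / α)) * deriv g (x / α)) :
    ∀ x : ℝ,
      (fun h : ℝ → ℝ => fun x : ℝ =>
          α * (deriv g (g (x / α)) * h (x / α) + h (g (x / α))))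
        (fun x => g x ^ k - x ^ k * deriv g x) x
      = α ^ (1 - (k : ℤ)) * (g x ^ k - x ^ k * deriv g x) :=
  naiveDoublingLinearization_powSubPowMul hα heq heq' k

theorem naive_linearization_eigenfunctions (g : ℝ → ℝ) (α : ℝ) (k : ℕ)
    (hg : Differentiable ℝ g) (hα : α ≠ 0)
    (heq : ∀ x : ℝ, g x = α * g (g (x / α)))
    (heq' : ∀ x : ℝ, deriv g x = deriv g (g (x / α)) * deriv g (x / α)) :
    ∀ x : ℝ,
      (fun h : ℝ → ℝ => fun x : ℝ =>
          α * (deriv g (g (x / α)) * h (x / α) + h (g (x / α))))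
        (fun x => g x ^ k - x ^ k * deriv g x) x
      = α ^ (1 - (k : ℤ)) * (g x ^ k - x ^ k * deriv g x) :=
  naive_linearization_eigenfunctions_general g α k hα heq heq'
end

section
/- Let g : ℝ → ℝ be differentiable with α ≠ 0, satisfying g(x) = α·g(g(x/α)) and g'(x) = g'(g(x/α))·g'(x/α) for all x. Then h(x) = g(x) − x·g'(x) satisfies L(g)h = h, where L(g)h(x) = α·(g'(g(x/α))·h(x/α) + h(g(x/α))). In other words, 1 is an eigenvalue of the naive linearization L(g) with eigenfunction g − x·g'. -/
theorem naive_linearization_eigenvalue_one_general (g : ℝ → ℝ) (α : ℝ)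
    (hα : α ≠ 0)
    (heq : ∀ x : ℝ, g x = α * g (g (x / α)))
    (heq' : ∀ x : ℝ, deriv g x = deriv g (g (x / α)) * deriv g (x / α)) :
    ∀ x : ℝ,
      (fun h : ℝ → ℝ => fun x : ℝ =>
          α * (deriv g (g (x / α)) * h (x / α) + h (g (x / α))))
        (fun x => g x - x * deriv g x) x
      = g x - x * deriv g x := by
  intro x
  calc α * (deriv g (g (x / α)) * (g (x / α) - x / α * deriv g (x / α))
          + (g (g (x / α)) - g (x / α) * deriv g (g (x / α))))
      = α * g (g (x / α)) - α * (x / α) * (deriv g (g (x / α)) * deriv g (x / α)) := by ring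
    _ = g x - x * deriv g x := by rw [← heq, ← heq', mul_div_cancel₀ x hα]

theorem naive_linearization_eigenvalue_one (g : ℝ → ℝ) (α : ℝ)
    (hg : Differentiable ℝ g) (hα : α ≠ 0)
    (heq : ∀ x : ℝ, g x = α * g (g (x / α)))
    (heq' : ∀ x : ℝ, deriv g x = deriv g (g (x / α)) * deriv g (x / α)) :
    ∀ x : ℝ,
      (fun h : ℝ → ℝ => fun x : ℝ =>
          α * (deriv g (g (x / α)) * h (x / α) + h (g (x / α))))
        (fun x => g x - x * deriv g x) x
      = g x - x * deriv g x :=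
  naive_linearization_eigenvalue_one_general g α hα heq heq'
end

section
/- Let g : ℝ → ℝ be differentiable with g(1) ≠ 0, α = 1/g(1), g'(1) = α, satisfying g(x) = α·g(g(x/α)) and g'(x) = g'(g(x/α))·g'(x/α) for all x. Define dT(g)h(x) = α·(g'(g(x/α))·h(x/α) + h(g(x/α))) + α·(x·g'(x) − g(x))·h(1). Then h(x) = g(x) − x·g'(x) satisfies dT(g)h(x) = α²·h(x) for all x. -/
/-!
For `h = g - x g'` the functional equation and its derivative give `L(g) h = h`, while
`α h(1) = α g(1) - α g'(1) = 1 - α²`, so the rank-one term `α (x g' - g) h(1)` adds `(α² - 1) h`.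
-/

/-- The part `L(g)` of `dT(g)` that does not involve `h(1)`. -/
noncomputable def doublingLinearPart (g : ℝ → ℝ) (α : ℝ) (h : ℝ → ℝ) (x : ℝ) : ℝ :=
  α * (deriv g (g (x / α)) * h (x / α) + h (g (x / α)))

theorem doublingLinearPart_apply_sub_mul_deriv {g : ℝ → ℝ} {α : ℝ} (hα : α ≠ 0)
    (heq : ∀ x : ℝ, g x = α * g (g (x / α)))
    (heq' : ∀ x : ℝ, deriv g x = deriv g (g (x / α)) * deriv g (x / α)) (x : ℝ) :
    doublingLinearPart g α (fun y => g y - y * deriv g y) x = g x - x * deriv g x := by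
  have hx : α * (x / α) = x := mul_div_cancel₀ x hα
  unfold doublingLinearPart
  linear_combination x * heq' x - heq x - deriv g (g (x / α)) * deriv g (x / α) * hx

theorem dT_eigenvalue_alpha_sq_general (g : ℝ → ℝ) (α : ℝ)
    (h1 : g 1 ≠ 0)
    (hα : α = 1 / g 1) (hd1 : deriv g 1 = α)
    (heq : ∀ x : ℝ, g x = α * g (g (x / α)))
    (heq' : ∀ x : ℝ, deriv g x = deriv g (g (x / α)) * deriv g (x / α)) :
    ∀ x : ℝ,
      (fun h : ℝ → ℝ => fun x : ℝ =>
          α * (deriv g (g (x / α)) * h (x / α) + h (g (x / α))) +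
          α * (x * deriv g x - g x) * h 1)
        (fun x => g x - x * deriv g x) x
      = α ^ 2 * (g x - x * deriv g x) := by
  intro x
  have hα0 : α ≠ 0 := hα ▸ one_div_ne_zero h1
  have hfixed := doublingLinearPart_apply_sub_mul_deriv hα0 heq heq' x
  have hcorr : α * (g 1 - 1 * deriv g 1) = 1 - α ^ 2 := by
    rw [hd1, hα]
    field_simp
  unfold doublingLinearPart at hfixed
  beta_reduce at hfixed ⊢
  linear_combination hfixed + (x * deriv g x - g x) * hcorr

theorem dT_eigenvalue_alpha_sq (g : ℝ → ℝ) (α : ℝ)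
    (hg : Differentiable ℝ g) (h1 : g 1 ≠ 0)
    (hα : α = 1 / g 1) (hd1 : deriv g 1 = α)
    (heq : ∀ x : ℝ, g x = α * g (g (x / α)))
    (heq' : ∀ x : ℝ, deriv g x = deriv g (g (x / α)) * deriv g (x / α)) :
    ∀ x : ℝ,
      (fun h : ℝ → ℝ => fun x : ℝ =>
          α * (deriv g (g (x / α)) * h (x / α) + h (g (x / α))) +
          α * (x * deriv g x - g x) * h 1)
        (fun x => g x - x * deriv g x) x
      = α ^ 2 * (g x - x * deriv g x) :=
  dT_eigenvalue_alpha_sq_general g α h1 hα hd1 heq heq'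
end

section
/- Let g : ℝ → ℝ be differentiable with g(1) ≠ 0, α = 1/g(1), g'(1) = α, satisfying g(x) = α·g(g(x/α)) and g'(x) = g'(g(x/α))·g'(x/α) for all x. Let k be a natural number with k ≠ 1, and define h(x) = g(x) − x·g'(x) − g(x)^k + x^k·g'(x). Then dT(g)h(x) = α^{1−k}·h(x) for all x, where dT(g)h(x) = α·(g'(g(x/α))·h(x/α) + h(g(x/α))) + α·(x·g'(x) − g(x))·h(1). -/
/-!
Write `φⱼ(x) = g(x)ʲ - xʲ g'(x)`, so that `h = φ₁ - φₖ`. The two functional equations give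
`g'(g(x/α)) φⱼ(x/α) + φⱼ(g(x/α)) = g(g(x/α))ʲ - (x/α)ʲ g'(x) = α⁻ʲ φⱼ(x)`, so every `φⱼ` is an
eigenfunction of the linear part of `dT(g)` with eigenvalue `α¹⁻ʲ`. The remaining rank-one term is
`-α h(1) φ₁`, and `h(1) = α⁻¹ - α⁻ᵏ` cancels the mismatch between the eigenvalues of `φ₁` and `φₖ`.
-/

noncomputable section

namespace Feigenbaum

def eigenfunction (g : ℝ → ℝ) (j : ℕ) (x : ℝ) : ℝ := g x ^ j - x ^ j * deriv g x

theorem eigenfunction_apply_one (g : ℝ → ℝ) {α : ℝ} (hg1 : g 1 = α⁻¹)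
    (hd1 : deriv g 1 = α) (j : ℕ) : eigenfunction g j 1 = α⁻¹ ^ j - α := by
  simp [eigenfunction, hg1, hd1]

theorem eigenfunction_doubling_linear_part (g : ℝ → ℝ) {α : ℝ} (hα : α ≠ 0)
    (heq : ∀ x, g x = α * g (g (x / α)))
    (heq' : ∀ x, deriv g x = deriv g (g (x / α)) * deriv g (x / α)) (j : ℕ) (x : ℝ) :
    α * (deriv g (g (x / α)) * eigenfunction g j (x / α) + eigenfunction g j (g (x / α))) =
      α ^ (1 - (j : ℤ)) * eigenfunction g j x := by
  have hgg : g (g (x / α)) = g x / α := by rw [heq x]; field_simp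
  calc α * (deriv g (g (x / α)) * eigenfunction g j (x / α) + eigenfunction g j (g (x / α)))
      = α * (g (g (x / α)) ^ j - (x / α) ^ j * (deriv g (g (x / α)) * deriv g (x / α))) := by
        unfold eigenfunction; ring
    _ = α * ((g x / α) ^ j - (x / α) ^ j * deriv g x) := by rw [hgg, ← heq']
    _ = α ^ (1 - (j : ℤ)) * eigenfunction g j x := by
        rw [zpow_sub₀ hα, zpow_one, zpow_natCast, eigenfunction, div_pow, div_pow]
        ring

end Feigenbaum

end

open Feigenbaum in
theorem dT_eigenvalue_alpha_pow_general (g : ℝ → ℝ) (α : ℝ) (k : ℕ)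
    (h1 : g 1 ≠ 0)
    (hα : α = 1 / g 1) (hd1 : deriv g 1 = α)
    (heq : ∀ x : ℝ, g x = α * g (g (x / α)))
    (heq' : ∀ x : ℝ, deriv g x = deriv g (g (x / α)) * deriv g (x / α)) :
    ∀ x : ℝ,
      (fun h : ℝ → ℝ => fun x : ℝ =>
          α * (deriv g (g (x / α)) * h (x / α) + h (g (x / α))) +
          α * (x * deriv g x - g x) * h 1)
        (fun x => g x - x * deriv g x - g x ^ k + x ^ k * deriv g x) x
      = α ^ (1 - (k : ℤ)) *
          (g x - x * deriv g x - g x ^ k + x ^ k * deriv g x) := by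
  intro x
  have hα0 : α ≠ 0 := by rw [hα]; exact one_div_ne_zero h1
  have hg1 : g 1 = α⁻¹ := by rw [hα, one_div, inv_inv]
  have hpow : α ^ (1 - (k : ℤ)) = α * α⁻¹ ^ k := by
    rw [zpow_sub₀ hα0, zpow_one, zpow_natCast, inv_pow, div_eq_mul_inv]
  have hsplit : ∀ y, g y - y * deriv g y - g y ^ k + y ^ k * deriv g y =
      eigenfunction g 1 y - eigenfunction g k y := by
    intro y; simp only [eigenfunction]; ring
  have hφ₁ : x * deriv g x - g x = -eigenfunction g 1 x := by simp only [eigenfunction]; ring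
  have e₁ := eigenfunction_doubling_linear_part g hα0 heq heq' 1 x
  have eₖ := eigenfunction_doubling_linear_part g hα0 heq heq' k x
  rw [Nat.cast_one, sub_self, zpow_zero, one_mul] at e₁
  simp only [hsplit, hφ₁, eigenfunction_apply_one g hg1 hd1, pow_one]
  linear_combination e₁ - eₖ - eigenfunction g 1 x * mul_inv_cancel₀ hα0 -
    eigenfunction g 1 x * hpow

theorem dT_eigenvalue_alpha_pow (g : ℝ → ℝ) (α : ℝ) (k : ℕ)
    (hg : Differentiable ℝ g) (h1 : g 1 ≠ 0)
    (hα : α = 1 / g 1) (hd1 : deriv g 1 = α)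
    (heq : ∀ x : ℝ, g x = α * g (g (x / α)))
    (heq' : ∀ x : ℝ, deriv g x = deriv g (g (x / α)) * deriv g (x / α))
    (hk : k ≠ 1) :
    ∀ x : ℝ,
      (fun h : ℝ → ℝ => fun x : ℝ =>
          α * (deriv g (g (x / α)) * h (x / α) + h (g (x / α))) +
          α * (x * deriv g x - g x) * h 1)
        (fun x => g x - x * deriv g x - g x ^ k + x ^ k * deriv g x) x
      = α ^ (1 - (k : ℤ)) *
          (g x - x * deriv g x - g x ^ k + x ^ k * deriv g x) :=
  dT_eigenvalue_alpha_pow_general g α k h1 hα hd1 heq heq'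
end
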